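/- arXiv:1204.1438 — 3 statements merged into one kernel-verified Lean document; each statement's English description precedes it below -/
import Mathlib

section
/- Let G be a graph of order n ≥ 3 containing at least one edge. Then γ_R(G) = 3 if and only if Δ(G) = n − 2. -/
open SimpleGraph Finset

/-- A Roman dominating function: values in {0,1,2}, every 0-vertex has a neighbor with value 2. -/
def IsRDF {V : Type*} (G : SimpleGraph V) (f : V → ℕ) : Prop :=
  (∀ v, f v ≤ 2) ∧ ∀ v, f v = 0 → ∃ u, G.Adj v u ∧ f u = 2

/-- The Roman domination number: minimum weight of a Roman dominating function. -/
noncomputable def romanDom {V : Type*} [Fintype V] (G : SimpleGraph V) : ℕ :=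
  sInf {k | ∃ f : V → ℕ, IsRDF G f ∧ ∑ v, f v = k}

/-- A dominating set. -/
def IsDomSet {V : Type*} (G : SimpleGraph V) (S : Set V) : Prop :=
  ∀ v, v ∈ S ∨ ∃ u ∈ S, G.Adj u v

/-- The domination number. -/
noncomputable def domNum {V : Type*} [Fintype V] (G : SimpleGraph V) : ℕ :=
  sInf {k | ∃ S : Set V, IsDomSet G S ∧ S.ncard = k}

/-- Degree of a vertex. -/
noncomputable def deg {V : Type*} (G : SimpleGraph V) (v : V) : ℕ :=
  (G.neighborSet v).ncard

/-- Maximum degree. -/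
noncomputable def maxDeg {V : Type*} (G : SimpleGraph V) : ℕ :=
  sSup {d | ∃ v, deg G v = d}

/-- Minimum degree. -/
noncomputable def minDeg {V : Type*} (G : SimpleGraph V) : ℕ :=
  sInf {d | ∃ v, deg G v = d}

/-- The Roman bondage number: minimum size of an edge set whose deletion increases `romanDom`. -/
noncomputable def romanBondage {V : Type*} [Fintype V] (G : SimpleGraph V) : ℕ :=
  sInf {k | ∃ B : Set (Sym2 V), B ⊆ G.edgeSet ∧
    romanDom (G.deleteEdges B) > romanDom G ∧ B.ncard = k}

/-- The bondage number: minimum size of an edge set whose deletion increases `domNum`. -/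
noncomputable def bondage {V : Type*} [Fintype V] (G : SimpleGraph V) : ℕ :=
  sInf {k | ∃ B : Set (Sym2 V), B ⊆ G.edgeSet ∧
    domNum (G.deleteEdges B) > domNum G ∧ B.ncard = k}

/-- A vertex cover. -/
def IsVC {V : Type*} (G : SimpleGraph V) (S : Set V) : Prop :=
  ∀ u v, G.Adj u v → u ∈ S ∨ v ∈ S

/-- The vertex covering number. -/
noncomputable def vcNum {V : Type*} [Fintype V] (G : SimpleGraph V) : ℕ :=
  sInf {k | ∃ S : Set V, IsVC G S ∧ S.ncard = k}

/-!
For a vertex `v`, putting `2` on `v`, `0` on its neighbours and `1` elsewhere is a Roman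
dominating function of weight `n + 1 - deg v`, so `γ_R + Δ ≤ n + 1`. Conversely, an optimal
function of weight at most `3` and less than `n` has a vertex `u` of value `2`, necessarily the
only one; every `0`-vertex is then a neighbour of `u`, which forces `γ_R + deg u ≥ n + 1`.
Hence `γ_R = n + 1 - Δ` as soon as `γ_R ≤ 3` and `γ_R < n`. In the remaining case
`γ_R = n = 3` one has `Δ ≤ 1`, and `Δ = 0` only for the edgeless graph.
-/

section RomanDomination

variable {V : Type*} {G : SimpleGraph V}

theorem isRDF_const_one : IsRDF G fun _ => 1 :=
  ⟨fun _ => one_le_two, fun _ h => absurd h one_ne_zero⟩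

variable [Fintype V]

theorem deg_eq_degree [DecidableRel G.Adj] (v : V) : deg G v = G.degree v := by
  rw [deg, ← Nat.card_coe_set_eq, Nat.card_eq_fintype_card, card_neighborSet_eq_degree]

theorem maxDeg_eq_maxDegree [DecidableRel G.Adj] [Nonempty V] : maxDeg G = G.maxDegree := by
  have hub : G.maxDegree ∈ upperBounds {d | ∃ v, deg G v = d} := by
    rintro _ ⟨v, rfl⟩
    exact deg_eq_degree (G := G) v ▸ G.degree_le_maxDegree v
  obtain ⟨v, hv⟩ := G.exists_maximal_degree_vertex
  refine le_antisymm (csSup_le ⟨_, v, rfl⟩ hub) ?_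
  rw [hv, ← deg_eq_degree]
  exact le_csSup ⟨_, hub⟩ ⟨v, rfl⟩

theorem romanDom_le {f : V → ℕ} (hf : IsRDF G f) : romanDom G ≤ ∑ v, f v :=
  Nat.sInf_le ⟨f, hf, rfl⟩

theorem exists_isRDF_sum_eq_romanDom (G : SimpleGraph V) :
    ∃ f, IsRDF G f ∧ ∑ v, f v = romanDom G :=
  Nat.sInf_mem (s := {k | ∃ f : V → ℕ, IsRDF G f ∧ ∑ v, f v = k})
    ⟨_, fun _ => 1, isRDF_const_one, rfl⟩

theorem romanDom_le_card (G : SimpleGraph V) : romanDom G ≤ Fintype.card V := by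
  simpa using romanDom_le (G := G) isRDF_const_one

theorem IsRDF.exists_eq_two_of_sum_lt_card {f : V → ℕ} (hf : IsRDF G f)
    (hlt : ∑ v, f v < Fintype.card V) : ∃ u, f u = 2 := by
  by_contra! h
  have hpos : ∀ v ∈ univ, 1 ≤ f v := fun v _ => Nat.one_le_iff_ne_zero.2 fun h0 =>
    let ⟨u, _, hu⟩ := hf.2 v h0
    h u hu
  have := sum_le_sum hpos
  simp only [sum_const, card_univ, smul_eq_mul, mul_one] at this
  omega

theorem eq_of_apply_eq_two_of_sum_le_three {f : V → ℕ} (hsum : ∑ v, f v ≤ 3) {u x : V}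
    (hu : f u = 2) (hx : f x = 2) : x = u := by
  classical
  by_contra hxu
  have := sum_le_sum_of_subset (f := f) (subset_univ {u, x})
  rw [sum_pair (Ne.symm hxu)] at this
  omega

theorem sum_add_degree_eq [DecidableRel G.Adj] (f : V → ℕ) (v : V) :
    ∑ x, (f x + if G.Adj v x then 1 else 0) = ∑ x, f x + G.degree v := by
  rw [sum_add_distrib, sum_boole, degree, neighborFinset_eq_filter, Nat.cast_id]

theorem sum_one_add_ite_eq_card_add_one [DecidableEq V] (v : V) :
    ∑ x, (1 + if x = v then 1 else 0) = Fintype.card V + 1 := by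
  simp [sum_add_distrib]

theorem romanDom_add_degree_le [DecidableRel G.Adj] (v : V) :
    romanDom G + G.degree v ≤ Fintype.card V + 1 := by
  classical
  set f : V → ℕ := fun x => if x = v then 2 else if G.Adj v x then 0 else 1
  have hf : IsRDF G f := by
    refine ⟨fun x => by simp only [f]; split_ifs <;> omega, fun x hx => ⟨v, ?_, by simp [f]⟩⟩
    simp only [f] at hx
    split_ifs at hx with hxv hvx
    exact hvx.symm
  have hweight : ∑ x, f x + G.degree v = Fintype.card V + 1 := by
    rw [← sum_add_degree_eq, ← sum_one_add_ite_eq_card_add_one v]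
    refine sum_congr rfl fun x _ => ?_
    by_cases hxv : x = v
    · simp [f, hxv]
    · by_cases hvx : G.Adj v x <;> simp [f, hxv, hvx]
  have := romanDom_le hf
  omega

theorem romanDom_add_maxDegree_le [DecidableRel G.Adj] [Nonempty V] :
    romanDom G + G.maxDegree ≤ Fintype.card V + 1 := by
  obtain ⟨v, hv⟩ := G.exists_maximal_degree_vertex
  exact hv ▸ romanDom_add_degree_le v

/-- Every `0`-vertex is dominated by `u`, so each vertex other than `u` contributes `1` to either
`∑ f` or `deg u`, and `u` itself contributes `2`. -/
theorem IsRDF.card_add_one_le_sum_add_degree [DecidableRel G.Adj] {f : V → ℕ} (hf : IsRDF G f)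
    {u : V} (hu : f u = 2) (huniq : ∀ x, f x = 2 → x = u) :
    Fintype.card V + 1 ≤ ∑ x, f x + G.degree u := by
  classical
  rw [← sum_add_degree_eq, ← sum_one_add_ite_eq_card_add_one u]
  refine sum_le_sum fun x _ => ?_
  by_cases hxu : x = u
  · simp [hxu, hu]
  rcases Nat.eq_zero_or_pos (f x) with h0 | hpos
  · obtain ⟨w, hadj, hw⟩ := hf.2 x h0
    obtain rfl := huniq w hw
    simp [hxu, h0, hadj.symm]
  · simp only [hxu, if_false]
    omega

theorem romanDom_add_maxDegree_eq [DecidableRel G.Adj] [Nonempty V] (h3 : romanDom G ≤ 3)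
    (hlt : romanDom G < Fintype.card V) :
    romanDom G + G.maxDegree = Fintype.card V + 1 := by
  obtain ⟨f, hf, hsum⟩ := exists_isRDF_sum_eq_romanDom G
  obtain ⟨u, hu⟩ := hf.exists_eq_two_of_sum_lt_card (hsum ▸ hlt)
  have hlow := hf.card_add_one_le_sum_add_degree hu fun x hx =>
    eq_of_apply_eq_two_of_sum_le_three (hsum ▸ h3) hu hx
  have := G.degree_le_maxDegree u
  have := romanDom_add_maxDegree_le (G := G)
  omega

end RomanDomination

theorem stmt4 {V : Type*} [Fintype V] (G : SimpleGraph V)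
    (hn : 3 ≤ Fintype.card V) (hne : G ≠ ⊥) :
    romanDom G = 3 ↔ maxDeg G = Fintype.card V - 2 := by
  classical
  have : Nonempty V := Fintype.card_pos_iff.1 (by omega)
  have hle := romanDom_add_maxDegree_le (G := G)
  have heq := romanDom_add_maxDegree_eq (G := G)
  have hcard := romanDom_le_card G
  have hΔ : G.maxDegree ≠ 0 := mt G.maxDegree_eq_zero_iff.1 hne
  rw [maxDeg_eq_maxDegree]
  omega
end

section
/- Let G be a connected graph of order n ≥ 3 with γ_R(G) = γ(G) + 1. Then b_R(G) ≤ b(G), where b(G) is the bondage number. -/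
open SimpleGraph Finset

/-!
Every Roman dominating function `f` has weight at least `min(n, γ + 1)`: if `f` takes the value
`2` somewhere, its support dominates and is lighter than `f`; otherwise `f ≥ 1` everywhere. A
connected graph on `n ≥ 3` vertices has a vertex `x` with two neighbours `a ≠ b`, so
`V ∖ {a, b}` dominates and `γ(G) + 2 ≤ n`. Hence deleting a minimum bondage set `B` gives
`γ_R(G - B) ≥ min(n, γ(G - B) + 1) ≥ γ(G) + 2 > γ_R(G)`.
-/

namespace SimpleGraph

variable {V : Type*}

lemma exists_adj_adj_of_connected [Fintype V] {G : SimpleGraph V} (hconn : G.Connected)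
    (hn : 3 ≤ Fintype.card V) : ∃ x a b : V, a ≠ b ∧ G.Adj x a ∧ G.Adj x b := by
  classical
  by_contra! hsub
  have : Nontrivial V := Fintype.one_lt_card_iff_nontrivial.mp (by omega)
  obtain ⟨a⟩ := hconn.nonempty
  obtain ⟨b, hab⟩ := hconn.preconnected.exists_adj_of_nontrivial a
  obtain ⟨d, -, hd⟩ : ∃ d ∈ (univ : Finset V), d ∉ ({a, b} : Finset V) :=
    exists_mem_notMem_of_card_lt_card <| card_le_two.trans_lt (by rw [card_univ]; omega)
  obtain ⟨w⟩ := hconn.preconnected a d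
  obtain ⟨⟨⟨x, y⟩, hxy⟩, -, hx, hy⟩ :=
    w.exists_boundary_dart {a, b} (by simp) (by simpa using hd)
  -- the boundary vertex `x ∈ {a, b}` would have two distinct neighbours
  simp only [Set.mem_insert_iff, Set.mem_singleton_iff, not_or] at hx hy
  rcases hx with rfl | rfl
  · exact hsub x b y (Ne.symm hy.2) hab hxy
  · exact hsub x a y (Ne.symm hy.1) hab.symm hxy

lemma IsDomSet.domNum_le [Fintype V] {G : SimpleGraph V} {S : Set V} (hS : IsDomSet G S) :
    domNum G ≤ S.ncard :=
  Nat.sInf_le ⟨S, hS, rfl⟩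

lemma isDomSet_compl_pair {G : SimpleGraph V} {x a b : V} (hxa : G.Adj x a) (hxb : G.Adj x b) :
    IsDomSet G {a, b}ᶜ := by
  intro v
  by_cases hv : v ∈ ({a, b} : Set V)
  · refine Or.inr ⟨x, ?_, ?_⟩
    · simp [hxa.ne, hxb.ne]
    · rcases hv with rfl | rfl <;> assumption
  · exact Or.inl hv

lemma domNum_add_two_le_card [Fintype V] {G : SimpleGraph V} {x a b : V} (hab : a ≠ b)
    (hxa : G.Adj x a) (hxb : G.Adj x b) : domNum G + 2 ≤ Fintype.card V := by
  have hle := (isDomSet_compl_pair hxa hxb).domNum_le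
  rw [Set.ncard_compl, Set.ncard_pair hab, Nat.card_eq_fintype_card] at hle
  have : 2 ≤ Fintype.card V := by
    simpa [Set.ncard_pair hab] using Set.ncard_le_card ({a, b} : Set V)
  omega

lemma domNum_bot [Fintype V] : domNum (⊥ : SimpleGraph V) = Fintype.card V := by
  have hS : ∀ {S : Set V}, IsDomSet ⊥ S → S = Set.univ := fun hS =>
    Set.eq_univ_of_forall fun v => (hS v).resolve_right (by simp)
  apply le_antisymm
  · simpa using (show IsDomSet (⊥ : SimpleGraph V) Set.univ from fun v => Or.inl trivial).domNum_le
  · refine le_csInf ⟨_, Set.univ, fun v => Or.inl trivial, rfl⟩ ?_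
    rintro k ⟨S, hdom, rfl⟩
    simp [hS hdom]

lemma IsRDF.min_card_le_sum [Fintype V] {G : SimpleGraph V} {f : V → ℕ} (hf : IsRDF G f) :
    min (Fintype.card V) (domNum G + 1) ≤ ∑ v, f v := by
  classical
  by_cases htwo : ∃ w, f w = 2
  · obtain ⟨w, hw⟩ := htwo
    set S : Finset V := univ.filter (f · ≠ 0)
    have hdom : IsDomSet G (S : Set V) := by
      intro v
      by_cases hv : f v = 0
      · obtain ⟨u, hvu, hu⟩ := hf.2 v hv
        exact Or.inr ⟨u, by simp [S, hu], hvu.symm⟩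
      · exact Or.inl (by simp [S, hv])
    have hlt : #S < ∑ v ∈ S, f v := by
      rw [card_eq_sum_ones]
      refine sum_lt_sum (fun v hv => ?_) ⟨w, by simp [S, hw], by omega⟩
      simp only [S, mem_filter] at hv
      omega
    have hγ : domNum G ≤ #S := by simpa using hdom.domNum_le
    have hsub : ∑ v ∈ S, f v ≤ ∑ v, f v := sum_le_sum_of_subset (subset_univ S)
    omega
  · push Not at htwo
    have hpos : ∀ v, 1 ≤ f v := fun v => Nat.one_le_iff_ne_zero.mpr fun h0 =>
      let ⟨u, _, hu⟩ := hf.2 v h0; htwo u hu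
    calc min (Fintype.card V) (domNum G + 1) ≤ ∑ _v : V, 1 := by simp
      _ ≤ ∑ v, f v := sum_le_sum fun v _ => hpos v

lemma min_card_le_romanDom [Fintype V] (G : SimpleGraph V) :
    min (Fintype.card V) (domNum G + 1) ≤ romanDom G :=
  le_csInf ⟨_, fun _ => 2, ⟨fun _ => le_rfl, fun _ h => by simp at h⟩, rfl⟩
    fun _ ⟨_, hf, hsum⟩ => hsum ▸ hf.min_card_le_sum

lemma exists_deleteEdges_ncard_eq_bondage [Fintype V] {G : SimpleGraph V}
    (hγ : domNum G < Fintype.card V) :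
    ∃ B ⊆ G.edgeSet, domNum G < domNum (G.deleteEdges B) ∧ B.ncard = bondage G := by
  have hne : {k | ∃ B : Set (Sym2 V), B ⊆ G.edgeSet ∧
      domNum (G.deleteEdges B) > domNum G ∧ B.ncard = k}.Nonempty :=
    ⟨_, G.edgeSet, subset_rfl, by simpa [domNum_bot] using hγ, rfl⟩
  exact Nat.sInf_mem hne

end SimpleGraph

theorem stmt8 {V : Type*} [Fintype V] (G : SimpleGraph V)
    (hconn : G.Connected) (hn : 3 ≤ Fintype.card V)
    (hγ : romanDom G = domNum G + 1) :
    romanBondage G ≤ bondage G := by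
  obtain ⟨x, a, b, hab, hxa, hxb⟩ := exists_adj_adj_of_connected hconn hn
  have hcard := domNum_add_two_le_card hab hxa hxb
  obtain ⟨B, hB, hlt, hBcard⟩ := exists_deleteEdges_ncard_eq_bondage (G := G) (by omega)
  refine Nat.sInf_le ⟨B, hB, ?_, hBcard⟩
  have := min_card_le_romanDom (G.deleteEdges B)
  omega
end

section
/- Let G be a graph with no isolated vertices such that γ_R(G) = 2β(G), where β(G) is the vertex covering number. Then b_R(G) ≥ δ(G), the minimum degree of G. -/
open SimpleGraph Finset

/-!
Deleting fewer than `δ(G)` edges leaves no isolated vertex, so the resulting graph `H` has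
`γ_R(H) ≤ 2β(H) ≤ 2β(G) = γ_R(G)`: only edge sets of size at least `δ(G)` can raise `γ_R`.
Some edge set does raise it (otherwise `b_R(G)`, an `sInf` over the empty set, would be `0`):
deleting every edge gives `γ_R = |V|`, whereas a vertex of degree at least two yields a Roman
dominating function of `G` of weight `|V| - 1`.
-/

section

variable {V : Type*}

lemma minDeg_le_deg (G : SimpleGraph V) (v : V) : minDeg G ≤ deg G v :=
  Nat.sInf_le ⟨v, rfl⟩

lemma exists_two_le_deg_of_two_le_maxDeg [Finite V] {G : SimpleGraph V} (hΔ : 2 ≤ maxDeg G) :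
    ∃ v, 2 ≤ deg G v := by
  have hne : (Set.range (deg G)).Nonempty := by
    refine Set.nonempty_iff_ne_empty.2 fun h => ?_
    have hmax : maxDeg G = sSup (Set.range (deg G)) := rfl
    rw [hmax, h, csSup_empty, bot_eq_zero] at hΔ
    omega
  obtain ⟨v, hv⟩ := Nat.sSup_mem hne (Set.finite_range _).bddAbove
  exact ⟨v, hv ▸ hΔ⟩

lemma exists_adj_deleteEdges_of_ncard_lt_minDeg {G : SimpleGraph V} {B : Set (Sym2 V)}
    (hB : B.Finite) (hBδ : B.ncard < minDeg G) (v : V) : ∃ u, (G.deleteEdges B).Adj v u := by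
  by_contra! hiso
  have hmaps : ∀ u ∈ G.neighborSet v, s(v, u) ∈ B := fun u hu => by
    by_contra huB
    exact hiso u (deleteEdges_adj.2 ⟨hu, huB⟩)
  have hinj : Set.InjOn (fun u => s(v, u)) (G.neighborSet v) := fun a _ b _ hab =>
    Sym2.congr_right.1 hab
  exact hBδ.not_ge ((minDeg_le_deg G v).trans (Set.ncard_le_ncard_of_injOn _ hmaps hinj hB))

variable [Fintype V]

lemma exists_isVC_ncard_eq_vcNum (G : SimpleGraph V) : ∃ S, IsVC G S ∧ S.ncard = vcNum G :=
  Nat.sInf_mem (s := {k | ∃ S, IsVC G S ∧ S.ncard = k})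
    ⟨_, Set.univ, fun _ _ _ => Or.inl trivial, rfl⟩

lemma vcNum_deleteEdges_le (G : SimpleGraph V) (B : Set (Sym2 V)) :
    vcNum (G.deleteEdges B) ≤ vcNum G := by
  obtain ⟨S, hS, hcard⟩ := exists_isVC_ncard_eq_vcNum G
  exact hcard ▸ Nat.sInf_le ⟨S, fun u v huv => hS u v (deleteEdges_adj.1 huv).1, rfl⟩

lemma romanDom_le_two_mul_vcNum {G : SimpleGraph V} (hniso : ∀ v, ∃ u, G.Adj v u) :
    romanDom G ≤ 2 * vcNum G := by
  classical
  obtain ⟨S, hS, hcard⟩ := exists_isVC_ncard_eq_vcNum G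
  let f : V → ℕ := fun v => if v ∈ S then 2 else 0
  have hf : IsRDF G f := by
    refine ⟨fun v => by simp only [f]; split <;> omega, fun v hv => ?_⟩
    obtain ⟨u, hu⟩ := hniso v
    have hvS : v ∉ S := fun h => by simp [f, h] at hv
    exact ⟨u, hu, by simp [f, (hS v u hu).resolve_left hvS]⟩
  have hsum : ∑ v, f v = 2 * S.ncard := by
    rw [← Finset.sum_filter, Finset.sum_const, smul_eq_mul, mul_comm,
      Set.ncard_eq_toFinset_card', Set.filter_mem_univ_eq_toFinset]
  exact hcard ▸ hsum ▸ Nat.sInf_le ⟨f, hf, rfl⟩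

lemma romanDom_bot : romanDom (⊥ : SimpleGraph V) = Fintype.card V := by
  have hone : IsRDF (⊥ : SimpleGraph V) 1 := ⟨fun _ => by simp, fun _ h => by simp at h⟩
  have hcard : Fintype.card V ∈ {k | ∃ f : V → ℕ, IsRDF ⊥ f ∧ ∑ v, f v = k} :=
    ⟨1, hone, by simp⟩
  refine le_antisymm (Nat.sInf_le hcard) (le_csInf ⟨_, hcard⟩ ?_)
  rintro _ ⟨f, hf, rfl⟩
  have hpos : ∀ v, 1 ≤ f v := fun v => Nat.one_le_iff_ne_zero.2 fun h => by
    obtain ⟨u, hu, -⟩ := hf.2 v h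
    exact hu
  simpa using Finset.sum_le_sum fun v (_ : v ∈ Finset.univ) => hpos v

lemma romanDom_lt_card_of_two_le_deg {G : SimpleGraph V} {v : V} (hv : 2 ≤ deg G v) :
    romanDom G < Fintype.card V := by
  classical
  obtain ⟨a, b, ha, hb, hab⟩ := (Set.one_lt_ncard_iff (Set.toFinite _)).1 hv
  have hva : v ≠ a := G.ne_of_adj ha
  have hvb : v ≠ b := G.ne_of_adj hb
  -- weight 2 on `v`, 0 on two of its neighbours `a`, `b` and 1 elsewhere: total `|V| - 1`
  let f : V → ℕ := fun w => if w = a ∨ w = b then 0 else if w = v then 2 else 1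
  have hf : IsRDF G f := by
    refine ⟨fun w => by simp only [f]; split_ifs <;> omega,
      fun w hw => ⟨v, ?_, by simp [f, hva, hvb]⟩⟩
    have hw' : w = a ∨ w = b := by
      by_contra h
      simp only [f, if_neg h] at hw
      split_ifs at hw
    rcases hw' with rfl | rfl
    exacts [ha.symm, hb.symm]
  have hpoint : ∀ w, f w + (if a = w then 1 else 0) + (if b = w then 1 else 0) =
      1 + (if v = w then 1 else 0) := by
    intro w
    by_cases hwa : w = a <;> by_cases hwb : w = b <;> by_cases hwv : w = v <;>
      simp_all [f, eq_comm]
  have hsum := Finset.sum_congr rfl fun w (_ : w ∈ Finset.univ) => hpoint w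
  simp only [Finset.sum_add_distrib, Finset.sum_ite_eq, Finset.mem_univ, if_true,
    Finset.sum_const, Finset.card_univ, smul_eq_mul, mul_one] at hsum
  have hle := Nat.sInf_le (s := {k | ∃ f : V → ℕ, IsRDF G f ∧ ∑ v, f v = k}) ⟨f, hf, rfl⟩
  exact hle.trans_lt (by omega)

end

theorem stmt14_general {V : Type*} [Fintype V] (G : SimpleGraph V)
    (hΔ : 2 ≤ maxDeg G)
    (hβ : romanDom G = 2 * vcNum G) :
    minDeg G ≤ romanBondage G := by
  obtain ⟨v, hv⟩ := exists_two_le_deg_of_two_le_maxDeg hΔ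
  have hdeleteAll : romanDom G < romanDom (G.deleteEdges G.edgeSet) := by
    rw [deleteEdges_edgeSet, sdiff_self, romanDom_bot]
    exact romanDom_lt_card_of_two_le_deg hv
  refine le_csInf ⟨_, G.edgeSet, subset_rfl, hdeleteAll, rfl⟩ ?_
  rintro _ ⟨B, -, hB, rfl⟩
  by_contra! hBδ
  have hniso := exists_adj_deleteEdges_of_ncard_lt_minDeg (Set.toFinite B) hBδ
  refine hB.not_ge ?_
  calc romanDom (G.deleteEdges B)
      ≤ 2 * vcNum (G.deleteEdges B) := romanDom_le_two_mul_vcNum hniso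
    _ ≤ 2 * vcNum G := Nat.mul_le_mul_left 2 (vcNum_deleteEdges_le G B)
    _ = romanDom G := hβ.symm

theorem stmt14 {V : Type*} [Fintype V] (G : SimpleGraph V)
    (hniso : ∀ v : V, ∃ u, G.Adj v u) (hΔ : 2 ≤ maxDeg G)
    (hβ : romanDom G = 2 * vcNum G) :
    minDeg G ≤ romanBondage G :=
  stmt14_general G hΔ hβ
end
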